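/- arXiv:2306.14192 — 2 statements merged into one kernel-verified Lean document; each statement's English description precedes it below -/
import Mathlib

section
/- Let Σ be a finite alphabet and w, w̃ ∈ Σ* with m := ι(w) = ι(w̃) < k. Then w ∼_k w̃ if and only if α_i ∼_{k−m} α̃_i for all i ∈ {0,1,…,m} and w ∼_k w', where w' := α₀β̃₁α₁β̃₂α₂⋯β̃_mα_m is the word obtained by combining the α-factors of w with the β-factors of w̃. -/
open List

variable {α : Type*} [DecidableEq α] [Fintype α]

/-- Simon `k`-congruence: `u` and `v` have the same scattered factors
(subsequences) of length at most `k`. -/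
def SimonCongr (k : ℕ) (u v : List α) : Prop :=
  ∀ s : List α, s.length ≤ k → (s.Sublist u ↔ s.Sublist v)

/-- `w` is `k`-universal with respect to the alphabet `S`: every word of length `k`
over `S` is a scattered factor of `w`. -/
def UniversalOn (S : Finset α) (k : ℕ) (w : List α) : Prop :=
  ∀ s : List α, s.length = k → (∀ x ∈ s, x ∈ S) → s.Sublist w

/-- The universality index of `w` w.r.t. the alphabet `S`. -/
noncomputable def iotaOn (S : Finset α) (w : List α) : ℕ :=
  sSup {k | UniversalOn S k w}

/-- The universality index of `w` w.r.t. the full alphabet. -/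
noncomputable def iotaUniv (w : List α) : ℕ := iotaOn Finset.univ w

/-- `a` is an arch w.r.t. `S`: it contains every letter of `S`, and its last letter
belongs to `S` and occurs exactly once in `a`. -/
def IsArchOn (S : Finset α) (a : List α) : Prop :=
  (∀ x ∈ S, x ∈ a) ∧ ∃ a' x, a = a' ++ [x] ∧ x ∈ S ∧ x ∉ a'

/-- `(ars, r)` is the arch factorization of `w` w.r.t. `S`. -/
def IsArchFactOn (S : Finset α) (w : List α) (ars : List (List α)) (r : List α) : Prop :=
  w = ars.flatten ++ r ∧ (∀ a ∈ ars, IsArchOn S a) ∧ ¬ (∀ x ∈ S, x ∈ r)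

/-- `(A, B)` is the α-β-factorization of `w` with `m` arches:
`αᵢ₋₁βᵢ` (for `i ∈ [m]`) together with rest `α_m` is the arch factorization of `w`, and
`(β_{m-i}α_{m-i})^R` together with rest `α₀^R` is the arch factorization of `w^R`. -/
def IsAlphaBetaFact (w : List α) (m : ℕ) (A B : ℕ → List α) : Prop :=
  IsArchFactOn Finset.univ w (List.ofFn fun i : Fin m => A i.val ++ B (i.val + 1)) (A m) ∧
  IsArchFactOn Finset.univ w.reverse
    (List.ofFn fun i : Fin m => (B (m - i.val) ++ A (m - i.val)).reverse) ((A 0).reverse)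

/-- The concatenation `αᵢ βᵢ₊₁ αᵢ₊₁ ⋯ βⱼ αⱼ`. -/
def abSeg (A B : ℕ → List α) (i j : ℕ) : List α :=
  A i ++ (((List.Ico (i + 1) (j + 1)).map fun l => B l ++ A l).flatten)

/-- The core of a `β`-factor: the factor with its first and last letter removed. -/
def coreOf (b : List α) : List α := (b.drop 1).dropLast

/-!
Arches contain every letter, so `n` consecutive arches absorb any `n` letters of a scattered
factor. Hence a scattered factor of length at most `k` that reaches `αⱼ` from both sides through the
`m` (reversed) arches around it uses at most `k - m` letters of `αⱼ`; replacing the `α`-factors of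
`w̃` one at a time by `(k-m)`-congruent ones therefore keeps the `∼ₖ`-class, so the mixed word is
`∼ₖ w̃` as soon as the `α`-factors are congruent. Conversely, the last letter of an arch and the
first letter of a reversed arch occur only once in it: framing a scattered factor `u` of `αⱼ` by
these letters gives a scattered factor of `w` of length `|u| + m` whose embeddings into `w̃` must
put `u` inside `α̃ⱼ`.
-/

section Words

variable {β : Type*}

theorem SimonCongr.refl (k : ℕ) (u : List β) : SimonCongr k u u :=
  fun _ _ => Iff.rfl

theorem SimonCongr.symm {k : ℕ} {u v : List β} (h : SimonCongr k u v) : SimonCongr k v u :=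
  fun s hs => (h s hs).symm

theorem SimonCongr.trans {k : ℕ} {u v z : List β} (h₁ : SimonCongr k u v)
    (h₂ : SimonCongr k v z) : SimonCongr k u z :=
  fun s hs => (h₁ s hs).trans (h₂ s hs)

theorem SimonCongr.mem_iff {k : ℕ} {u v : List β} (h : SimonCongr k u v) (hk : 0 < k) (a : β) :
    a ∈ u ↔ a ∈ v := by
  simpa using h [a] hk

theorem sublist_flatten_of_length_le : ∀ {Bs : List (List β)} {s : List β},
    (∀ b ∈ Bs, ∀ a, a ∈ b) → s.length ≤ Bs.length → s <+ Bs.flatten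
  | [], s, _, hs => by simp_all
  | _ :: _, [], _, _ => nil_sublist _
  | b :: Bs, a :: s, hB, hs => by
    rw [flatten_cons, ← singleton_append]
    exact (singleton_sublist.2 (hB b mem_cons_self a)).append
      (sublist_flatten_of_length_le (fun b' hb' => hB b' (mem_cons_of_mem _ hb'))
        (by simpa using hs))

theorem exists_sublist_flatten_append : ∀ {Bs : List (List β)} {s T : List β},
    (∀ b ∈ Bs, ∀ a, a ∈ b) → s <+ Bs.flatten ++ T →
    ∃ u v, s = u ++ v ∧ u <+ Bs.flatten ∧ v <+ T ∧ (v = [] ∨ Bs.length ≤ u.length)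
  | [], s, _, _, h => ⟨[], s, rfl, nil_sublist _, by simpa using h, Or.inr le_rfl⟩
  | _ :: _, [], _, _, _ => ⟨[], [], rfl, nil_sublist _, nil_sublist _, Or.inl rfl⟩
  | b :: Bs, a :: s, T, hB, h => by
    rw [flatten_cons, append_assoc] at h
    obtain ⟨s₁, s₂, hs, hs₁, hs₂, hne⟩ :
        ∃ s₁ s₂, a :: s = s₁ ++ s₂ ∧ s₁ <+ b ∧ s₂ <+ Bs.flatten ++ T ∧ s₁ ≠ [] := by
      obtain ⟨_ | ⟨c, s₁⟩, s₂, hs, hs₁, hs₂⟩ := sublist_append_iff.1 h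
      · rw [nil_append] at hs
        exact ⟨[a], s, rfl, singleton_sublist.2 (hB b mem_cons_self a),
          (sublist_cons_self a s).trans (hs ▸ hs₂), cons_ne_nil _ _⟩
      · exact ⟨c :: s₁, s₂, hs, hs₁, hs₂, cons_ne_nil _ _⟩
    obtain ⟨u, v, rfl, hu, hv, hlen⟩ :=
      exists_sublist_flatten_append (fun b' hb' => hB b' (mem_cons_of_mem _ hb')) hs₂
    refine ⟨s₁ ++ u, v, by rw [hs, append_assoc], hs₁.append hu, hv, hlen.imp_right ?_⟩
    have := length_pos_iff.2 hne
    simp only [length_cons, length_append]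
    omega

theorem exists_sublist_append_flatten {Bs : List (List β)} {s T : List β}
    (hB : ∀ b ∈ Bs, ∀ a, a ∈ b) (h : s <+ T ++ Bs.flatten) :
    ∃ u v, s = u ++ v ∧ u <+ T ∧ v <+ Bs.flatten ∧ (u = [] ∨ Bs.length ≤ v.length) := by
  have hB' : ∀ b ∈ (Bs.map reverse).reverse, ∀ a, a ∈ b := by
    simp only [mem_reverse, mem_map]
    rintro _ ⟨b, hb, rfl⟩ a
    exact mem_reverse.2 (hB b hb a)
  have h' : s.reverse <+ (Bs.map reverse).reverse.flatten ++ T.reverse := by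
    simpa [← reverse_flatten] using h.reverse
  obtain ⟨u, v, hs, hu, hv, hlen⟩ := exists_sublist_flatten_append hB' h'
  refine ⟨v.reverse, u.reverse, by simpa using congrArg reverse hs, by simpa using hv.reverse,
    by simpa [reverse_flatten] using hu.reverse, ?_⟩
  simpa using hlen

/-- Each block absorbs a letter of any scattered factor that reaches `x` or `y`, so at most
`k - (#L + #R)` of its letters fall into the middle factor. -/
theorem SimonCongr.flatten_append_append {k : ℕ} {L R : List (List β)} {x y : List β}
    (hL : ∀ b ∈ L, ∀ a, a ∈ b) (hR : ∀ b ∈ R, ∀ a, a ∈ b)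
    (hxy : SimonCongr (k - (L.length + R.length)) x y) :
    SimonCongr k (L.flatten ++ (x ++ R.flatten)) (L.flatten ++ (y ++ R.flatten)) := by
  suffices key : ∀ {x y : List β}, SimonCongr (k - (L.length + R.length)) x y →
      ∀ s : List β, s.length ≤ k →
        s <+ L.flatten ++ (x ++ R.flatten) → s <+ L.flatten ++ (y ++ R.flatten) from
    fun s hs => ⟨key hxy s hs, key hxy.symm s hs⟩
  intro x y hxy s hs h
  obtain ⟨u, v, rfl, hu, hv, hlen₁⟩ := exists_sublist_flatten_append hL h
  obtain ⟨p, q, rfl, hp, hq, hlen₂⟩ := exists_sublist_append_flatten hR hv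
  rcases eq_or_ne p [] with rfl | hp₀
  · exact hu.append ((nil_sublist y).append hq)
  · have hpq : p ++ q ≠ [] := by simp [hp₀]
    have hp_len : p.length ≤ k - (L.length + R.length) := by
      have := hlen₁.resolve_left hpq
      have := hlen₂.resolve_left hp₀
      simp only [length_append] at hs
      omega
    exact hu.append (((hxy p hp_len).1 hp).append hq)

theorem sublist_of_cons_sublist_append_cons {c : β} {t v Z : List β} (hc : c ∉ v)
    (h : c :: t <+ v ++ c :: Z) : t <+ Z := by
  obtain ⟨_ | ⟨d, s₁⟩, s₂, hs, hs₁, hs₂⟩ := sublist_append_iff.1 h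
  · rw [nil_append] at hs
    exact cons_sublist_cons.1 (hs ▸ hs₂)
  · obtain ⟨rfl, -⟩ := cons_eq_cons.1 hs
    exact absurd (hs₁.subset mem_cons_self) hc

/-- The witness is the word of the last letters of the blocks: each of them can only be matched at
the end of its block or further right. -/
theorem exists_markers_left : ∀ {Bs : List (List β)}, (∀ b ∈ Bs, ∃ v c, b = v ++ [c] ∧ c ∉ v) →
    ∃ ms : List β, ms.length = Bs.length ∧ ∀ t R, ms ++ t <+ Bs.flatten ++ R → t <+ R
  | [], _ => ⟨[], rfl, fun t R h => by simpa using h⟩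
  | b :: Bs, hB => by
    obtain ⟨v, c, rfl, hc⟩ := hB b mem_cons_self
    obtain ⟨ms, hlen, hms⟩ := exists_markers_left fun b' hb' => hB b' (mem_cons_of_mem _ hb')
    refine ⟨c :: ms, by simp [hlen], fun t R h => hms t R ?_⟩
    exact sublist_of_cons_sublist_append_cons hc (by simpa using h)

theorem exists_markers_right {Bs : List (List β)} (hB : ∀ b ∈ Bs, ∃ c v, b = c :: v ∧ c ∉ v) :
    ∃ ms : List β, ms.length = Bs.length ∧ ∀ t L, t ++ ms <+ L ++ Bs.flatten → t <+ L := by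
  have hB' : ∀ b ∈ (Bs.map reverse).reverse, ∃ v c, b = v ++ [c] ∧ c ∉ v := by
    simp only [mem_reverse, mem_map]
    rintro _ ⟨b, hb, rfl⟩
    obtain ⟨c, v, rfl, hc⟩ := hB b hb
    exact ⟨v.reverse, c, by simp, by simpa using hc⟩
  obtain ⟨ms, hlen, hms⟩ := exists_markers_left hB'
  refine ⟨ms.reverse, by simpa using hlen, fun t L h => reverse_sublist.1 (hms _ _ ?_)⟩
  simpa [reverse_flatten] using h.reverse

theorem IsArchOn.exists_eq_append_singleton {S : Finset β} {b : List β} (h : IsArchOn S b) :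
    ∃ v c, b = v ++ [c] ∧ c ∉ v :=
  let ⟨_, v, c, hb, _, hc⟩ := h
  ⟨v, c, hb, hc⟩

theorem IsArchOn.exists_eq_cons_of_reverse {S : Finset β} {b : List β}
    (h : IsArchOn S b.reverse) : ∃ c v, b = c :: v ∧ c ∉ v := by
  obtain ⟨v, c, hb, hc⟩ := h.exists_eq_append_singleton
  exact ⟨c, v.reverse, reverse_eq_concat.1 hb, by simpa using hc⟩

theorem IsArchOn.mem [Fintype β] {b : List β} (h : IsArchOn Finset.univ b) (a : β) : a ∈ b :=
  h.1 a (Finset.mem_univ a)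

def archesBefore (A B : ℕ → List β) (t : ℕ) : List (List β) :=
  (range t).map fun l => A l ++ B (l + 1)

def revArchesAfter (A B : ℕ → List β) (t m : ℕ) : List (List β) :=
  (Ico (t + 1) (m + 1)).map fun l => B l ++ A l

variable {A A' B : ℕ → List β} {b : List β} {t m : ℕ}

@[simp]
theorem length_archesBefore : (archesBefore A B t).length = t := by
  simp [archesBefore]

@[simp]
theorem length_revArchesAfter : (revArchesAfter A B t m).length = m - t := by
  simp [revArchesAfter, Ico.length]

theorem mem_archesBefore : b ∈ archesBefore A B t ↔ ∃ l < t, A l ++ B (l + 1) = b := by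
  simp [archesBefore]

theorem mem_revArchesAfter :
    b ∈ revArchesAfter A B t m ↔ ∃ l, (t < l ∧ l ≤ m) ∧ B l ++ A l = b := by
  simp [revArchesAfter, Ico.mem]

theorem archesBefore_congr (h : ∀ l < t, A l = A' l) :
    archesBefore A B t = archesBefore A' B t :=
  map_congr_left fun l hl => by rw [h l (mem_range.1 hl)]

theorem revArchesAfter_congr (h : ∀ l, t < l → l ≤ m → A l = A' l) :
    revArchesAfter A B t m = revArchesAfter A' B t m :=
  map_congr_left fun l hl => by
    obtain ⟨h₁, h₂⟩ := Ico.mem.1 hl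
    rw [h l h₁ (by omega)]

theorem abSeg_eq_append_revArchesAfter :
    abSeg A B t m = A t ++ (revArchesAfter A B t m).flatten :=
  rfl

theorem abSeg_eq_append_abSeg (h : t < m) :
    abSeg A B t m = A t ++ B (t + 1) ++ abSeg A B (t + 1) m := by
  simp [abSeg, Ico.eq_cons (show t + 1 < m + 1 by omega)]

theorem abSeg_zero_eq (h : t ≤ m) :
    abSeg A B 0 m = (archesBefore A B t).flatten ++ abSeg A B t m := by
  induction t with
  | zero => simp [archesBefore]
  | succ t ih =>
    rw [ih (by omega), abSeg_eq_append_abSeg (by omega)]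
    simp [archesBefore, range_succ]

theorem abSeg_congr (h : ∀ l ≤ m, A l = A' l) : abSeg A B 0 m = abSeg A' B 0 m := by
  rw [abSeg_eq_append_revArchesAfter, abSeg_eq_append_revArchesAfter, h 0 (Nat.zero_le m),
    revArchesAfter_congr fun l _ hl => h l hl]

namespace IsAlphaBetaFact

variable [Fintype β] {w : List β}

theorem eq_abSeg (hw : IsAlphaBetaFact w m A B) : w = abSeg A B 0 m := by
  rw [abSeg_zero_eq le_rfl, hw.1.1]
  simp [archesBefore, abSeg, ofFn_eq_map, ← map_coe_finRange_eq_range, Function.comp_def]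

theorem isArchOn_arch (hw : IsAlphaBetaFact w m A B) {l : ℕ} (hl : l < m) :
    IsArchOn Finset.univ (A l ++ B (l + 1)) :=
  hw.1.2.1 _ (mem_ofFn.2 ⟨⟨l, hl⟩, rfl⟩)

theorem isArchOn_reverse_revArch (hw : IsAlphaBetaFact w m A B) {l : ℕ} (h₀ : 0 < l)
    (hl : l ≤ m) : IsArchOn Finset.univ (B l ++ A l).reverse :=
  hw.2.2.1 _ (mem_ofFn.2 ⟨⟨m - l, by omega⟩, by simp [Nat.sub_sub_self hl]⟩)

theorem isArchOn_of_mem_archesBefore (hw : IsAlphaBetaFact w m A B) (ht : t ≤ m)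
    (hb : b ∈ archesBefore A B t) : IsArchOn Finset.univ b := by
  obtain ⟨l, hl, rfl⟩ := mem_archesBefore.1 hb
  exact hw.isArchOn_arch (by omega)

theorem isArchOn_reverse_of_mem_revArchesAfter (hw : IsAlphaBetaFact w m A B)
    (hb : b ∈ revArchesAfter A B t m) : IsArchOn Finset.univ b.reverse := by
  obtain ⟨l, ⟨hl₀, hl⟩, rfl⟩ := mem_revArchesAfter.1 hb
  exact hw.isArchOn_reverse_revArch (by omega) hl

/-- The last letters of the arches before `αⱼ` and the first letters of the reversed arches after
it, all taken from `w̃`, embed into the corresponding blocks of `w`; together with `u` they form a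
scattered factor of `w` of length `|u| + m`, and in `w̃` these letters pin `u` down to `α̃ⱼ`. -/
theorem sublist_of_simonCongr {k : ℕ} {w' : List β} {A' B' : ℕ → List β}
    (hw : IsAlphaBetaFact w m A B) (hw' : IsAlphaBetaFact w' m A' B') (hsim : SimonCongr k w w')
    {j : ℕ} (hj : j ≤ m) {u : List β} (hu : u.length + m ≤ k) (huA : u <+ A j) : u <+ A' j := by
  obtain ⟨ms₁, hlen₁, hcut₁⟩ := exists_markers_left fun b hb =>
    (hw'.isArchOn_of_mem_archesBefore hj hb).exists_eq_append_singleton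
  obtain ⟨ms₂, hlen₂, hcut₂⟩ := exists_markers_right fun b hb =>
    (hw'.isArchOn_reverse_of_mem_revArchesAfter (t := j) hb).exists_eq_cons_of_reverse
  have hsub : ms₁ ++ (u ++ ms₂) <+ w := by
    rw [hw.eq_abSeg, abSeg_zero_eq hj, abSeg_eq_append_revArchesAfter]
    refine .append ?_ (huA.append ?_) <;> refine sublist_flatten_of_length_le ?_ (by simp [*])
    · exact fun b hb => (hw.isArchOn_of_mem_archesBefore hj hb).mem
    · exact fun b hb a => mem_reverse.1 ((hw.isArchOn_reverse_of_mem_revArchesAfter hb).mem a)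
  have hlen : (ms₁ ++ (u ++ ms₂)).length ≤ k := by
    simp only [length_append, hlen₁, hlen₂, length_archesBefore, length_revArchesAfter]
    omega
  have hsub' := (hsim _ hlen).1 hsub
  rw [hw'.eq_abSeg, abSeg_zero_eq hj, abSeg_eq_append_revArchesAfter] at hsub'
  exact hcut₂ u (A' j) (hcut₁ _ _ hsub')

theorem simonCongr_alpha {k : ℕ} {w' : List β} {A' B' : ℕ → List β}
    (hw : IsAlphaBetaFact w m A B) (hw' : IsAlphaBetaFact w' m A' B') (hsim : SimonCongr k w w')
    (hmk : m ≤ k) {j : ℕ} (hj : j ≤ m) : SimonCongr (k - m) (A j) (A' j) :=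
  fun u hu => ⟨hw.sublist_of_simonCongr hw' hsim hj (by omega),
    hw'.sublist_of_simonCongr hw hsim.symm hj (by omega)⟩

end IsAlphaBetaFact

/-- Replace the `α`-factors one at a time, `αₜ` by `α̃ₜ` at step `t`; at that step the arches to the
left already carry `α̃`-factors and the reversed arches to the right still carry `α`-factors. -/
theorem simonCongr_abSeg_of_simonCongr_alpha {k : ℕ}
    (hleft : ∀ l < m, ∀ a, a ∈ A' l ++ B (l + 1))
    (hright : ∀ l, 0 < l → l ≤ m → ∀ a, a ∈ B l ++ A l)
    (hA : ∀ j ≤ m, SimonCongr (k - m) (A j) (A' j)) :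
    SimonCongr k (abSeg A B 0 m) (abSeg A' B 0 m) := by
  let D : ℕ → ℕ → List β := fun t j => if j < t then A' j else A j
  have hsplit : ∀ {t C}, t ≤ m → (∀ l < t, C l = A' l) → (∀ l, t < l → l ≤ m → C l = A l) →
      abSeg C B 0 m = (archesBefore A' B t).flatten ++ (C t ++ (revArchesAfter A B t m).flatten) :=
    fun ht hlt hgt => by
      rw [abSeg_zero_eq ht, abSeg_eq_append_revArchesAfter, archesBefore_congr hlt,
        revArchesAfter_congr hgt]
  have hstep : ∀ t ≤ m, SimonCongr k (abSeg (D t) B 0 m) (abSeg (D (t + 1)) B 0 m) := by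
    intro t ht
    rw [hsplit (C := D t) ht (fun l hl => if_pos hl) (fun l hl _ => if_neg (by omega)),
      hsplit (C := D (t + 1)) ht (fun l hl => if_pos (by omega)) (fun l hl _ => if_neg (by omega))]
    refine SimonCongr.flatten_append_append ?_ ?_ ?_
    · intro b hb
      obtain ⟨l, hl, rfl⟩ := mem_archesBefore.1 hb
      exact hleft l (by omega)
    · intro b hb
      obtain ⟨l, ⟨hl₀, hl⟩, rfl⟩ := mem_revArchesAfter.1 hb
      exact hright l (by omega) hl
    · simpa [D, Nat.add_sub_cancel' ht] using hA t ht
  have hchain : ∀ t ≤ m + 1, SimonCongr k (abSeg A B 0 m) (abSeg (D t) B 0 m) := by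
    intro t
    induction t with
    | zero =>
      intro _
      rw [abSeg_congr (A := D 0) fun l _ => if_neg (Nat.not_lt_zero l)]
      exact .refl k _
    | succ t ih => exact fun ht => (ih (by omega)).trans (hstep t (by omega))
  rw [abSeg_congr (A' := D (m + 1)) fun l hl => (if_pos (by omega)).symm]
  exact hchain (m + 1) le_rfl

end Words

theorem simonCongr_iff_alpha_and_mixed_general (k m : ℕ) (w w' : List α) (A B A' B' : ℕ → List α)
    (hw : IsAlphaBetaFact w m A B) (hw' : IsAlphaBetaFact w' m A' B')
    (hmk : m < k) :
    SimonCongr k w w' ↔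
      ((∀ i ≤ m, SimonCongr (k - m) (A i) (A' i)) ∧
        SimonCongr k w (abSeg A B' 0 m)) := by
  have hmixed : (∀ i ≤ m, SimonCongr (k - m) (A i) (A' i)) →
      SimonCongr k (abSeg A B' 0 m) w' := by
    intro hA
    rw [hw'.eq_abSeg]
    refine simonCongr_abSeg_of_simonCongr_alpha (fun l hl => (hw'.isArchOn_arch hl).mem)
      (fun l h₀ hl a => ?_) hA
    -- `αₗ` and `α̃ₗ` have the same letters since `k - m > 0`
    have := mem_reverse.1 ((hw'.isArchOn_reverse_revArch h₀ hl).mem a)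
    rw [mem_append] at this ⊢
    exact this.imp_right ((hA l hl).mem_iff (by omega) a).2
  constructor
  · intro hsim
    have hA : ∀ i ≤ m, SimonCongr (k - m) (A i) (A' i) := fun i hi =>
      hw.simonCongr_alpha hw' hsim hmk.le hi
    exact ⟨hA, hsim.trans (hmixed hA).symm⟩
  · rintro ⟨hA, hmix⟩
    exact hmix.trans (hmixed hA)

/-- `w ∼ₖ w̃` iff the `α`-factors are `(k−m)`-congruent and `w` is
`k`-congruent to the word obtained from `w`'s `α`-factors and `w̃`'s `β`-factors. -/
theorem simonCongr_iff_alpha_and_mixed (k m : ℕ) (w w' : List α) (A B A' B' : ℕ → List α)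
    (hw : IsAlphaBetaFact w m A B) (hw' : IsAlphaBetaFact w' m A' B')
    (hiw : iotaUniv w = m) (hiw' : iotaUniv w' = m) (hmk : m < k) :
    SimonCongr k w w' ↔
      ((∀ i ≤ m, SimonCongr (k - m) (A i) (A' i)) ∧
        SimonCongr k w (abSeg A B' 0 m)) :=
  simonCongr_iff_alpha_and_mixed_general k m w w' A B A' B' hw hw' hmk
end

section
/- Let Σ₂ = {a,b}, k ∈ ℕ, and w ∈ Σ₂*. The Simon congruence class [w]_{∼_k} = { w' ∈ Σ₂* : w' ∼_k w } is a singleton if and only if ι(w) < k and |α_i| < k − ι(w) for all i ∈ {0,1,…,ι(w)}, where α₀,…,α_{ι(w)} are the α-factors of the α-β-factorization of w. -/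
open List

variable {α : Type*} [DecidableEq α] [Fintype α]

/-!
Over two letters every `α`-factor of `w = α₀ (β₁α₁) ⋯ (β_mα_m)` is a power of a single letter,
and every `βᵢαᵢ`, being a reversed arch, is a block `f (¬f)^q` with `q ≥ 1`.

If `|αᵢ| ≥ k - m` for some `i`, then `αᵢ` sits between an `i`-universal and an
`(m - i)`-universal factor, and lengthening it by one letter keeps the word in its `∼_k` class.

Conversely, every word can be written `c^n u₁ ⋯ u_r` with blocks `uᵢ`; it is `r`-universal but
misses `¬c` followed by the first letters of the blocks, so a word `v ∼_k w` has `r = m` blocks.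
Comparing the scattered factors `c^t` followed by the first letters of the blocks forces `v` to
begin with the run `α₀` and then with the first letter of `β₁`, hence with the arch `α₀β₁`.
Cancelling that arch leaves `α₁ (β₂α₂) ⋯ (β_mα_m)` and a word with `m - 1` blocks, now
`∼_{k-1}`-congruent; the bound `|αᵢ| < k - m` keeps every comparison within length `k`.
-/

section ScatteredFactors

variable {σ : Type*}

theorem sublist_of_cons_sublist_append_of_not_mem {x : σ} {s P R : List σ} (hx : x ∉ P)
    (h : x :: s <+ P ++ R) : x :: s <+ R := by
  induction P with
  | nil => exact h
  | cons y P ih =>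
    rcases sublist_cons_iff.mp h with h | ⟨r, hr, -⟩
    · exact ih (fun hm => hx (mem_cons_of_mem y hm)) h
    · exact (hx ((cons.inj hr).1 ▸ mem_cons_self)).elim

theorem SimonCongr.of_append_cons {k : ℕ} {x : σ} {P V W : List σ} (hx : x ∉ P)
    (h : SimonCongr k (P ++ x :: V) (P ++ x :: W)) : SimonCongr (k - 1) V W := by
  intro s hs
  rcases eq_or_ne s [] with rfl | hne
  · simp
  have key : ∀ Z, s <+ Z ↔ x :: s <+ P ++ x :: Z := fun Z =>
    ⟨fun hz => (cons_sublist_cons.mpr hz).trans (sublist_append_right P _),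
      fun hz => cons_sublist_cons.mp (sublist_of_cons_sublist_append_of_not_mem hx hz)⟩
  rw [key, key]
  exact h _ (by have := length_pos_iff.mpr hne; simp; omega)

theorem UniversalOn.sublist {S : Finset σ} {k : ℕ} {w s : List σ} (h : UniversalOn S k w)
    (hs : s.length ≤ k) (hS : ∀ x ∈ s, x ∈ S) : s <+ w := by
  rcases s with _ | ⟨x, s⟩
  · exact nil_sublist w
  · refine (sublist_append_left _ (replicate (k - (s.length + 1)) x)).trans (h _ ?_ ?_)
    · simp only [length_append, length_cons, length_replicate] at hs ⊢
      omega
    · intro y hy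
      rcases mem_append.mp hy with hy | hy
      · exact hS y hy
      · exact eq_of_mem_replicate hy ▸ hS x mem_cons_self

theorem universalOn_flatten {S : Finset σ} {L : List (List σ)} (h : ∀ u ∈ L, ∀ x ∈ S, x ∈ u) :
    UniversalOn S L.length L.flatten := by
  induction L with
  | nil =>
    intro s hs _
    simp [eq_nil_of_length_eq_zero hs]
  | cons u L ih =>
    rintro (_ | ⟨x, s⟩) hs hS
    · simp at hs
    · rw [flatten_cons, ← singleton_append]
      exact (singleton_sublist.mpr (h u mem_cons_self x (hS x mem_cons_self))).append
        (ih (fun v hv => h v (mem_cons_of_mem u hv)) s (by simpa using hs)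
          (fun y hy => hS y (mem_cons_of_mem x hy)))

/-- A scattered factor of length `≤ k` that uses all `n + 1` copies of `c` embeds fewer than `i`
letters into `X` or fewer than `j` into `Y`, so one copy of `c` can be moved there. -/
theorem simonCongr_append_replicate_succ [Fintype σ] {k i j n : ℕ} {X Y : List σ}
    (hX : UniversalOn Finset.univ i X) (hY : UniversalOn Finset.univ j Y) (hk : k ≤ i + j + n)
    (c : σ) : SimonCongr k (X ++ replicate (n + 1) c ++ Y) (X ++ replicate n c ++ Y) := by
  intro s hs
  refine ⟨fun hv => ?_, fun hw => hw.trans (by simp)⟩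
  obtain ⟨s₁₂, s₃, rfl, h₁₂, h₃⟩ := sublist_append_iff.mp hv
  obtain ⟨s₁, s₂, rfl, h₁, h₂⟩ := sublist_append_iff.mp h₁₂
  obtain ⟨t, ht, rfl⟩ := sublist_replicate_iff.mp h₂
  rcases Nat.lt_or_ge t (n + 1) with ht' | ht'
  · exact (h₁.append ((replicate_sublist_replicate c).mpr (by omega))).append h₃
  obtain rfl : t = n + 1 := by omega
  simp only [length_append, length_replicate] at hs
  rcases Nat.lt_or_ge s₁.length i with hs₁ | hs₃
  · have hXc : s₁ ++ [c] <+ X := hX.sublist (by simp; omega) (by simp)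
    simpa [replicate_succ] using (hXc.append (Sublist.refl (replicate n c))).append h₃
  · have hYc : c :: s₃ <+ Y := hY.sublist (by simp; omega) (by simp)
    simpa [replicate_succ'] using (h₁.append (Sublist.refl (replicate n c))).append hYc

theorem not_isArchOn_append_replicate {S : Finset σ} (p : List σ) (t : ℕ) (c : σ) :
    ¬ IsArchOn S (p ++ replicate (t + 2) c) := by
  rintro ⟨-, a, x, heq, -, hx⟩
  rw [replicate_succ', ← append_assoc] at heq
  obtain ⟨rfl, hcx⟩ := append_inj' heq rfl
  exact hx (by simp [← (cons.inj hcx).1])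

theorem eq_replicate_of_append_eq_cons_replicate {b a : List σ} {f c : σ} {q : ℕ}
    (h : b ++ a = f :: replicate q c) (hb : b ≠ []) : a = replicate a.length c := by
  obtain ⟨y, b, rfl⟩ := exists_cons_of_ne_nil hb
  exact (append_eq_replicate_iff.mp (cons.inj h).2).2.2

end ScatteredFactors

section AbSeg

variable {σ : Type*}

def abBlocks (A B : ℕ → List σ) (i j : ℕ) : List (List σ) :=
  (Ico (i + 1) (j + 1)).map fun l => B l ++ A l

theorem abSeg_eq_append_flatten (A B : ℕ → List σ) (i j : ℕ) :
    abSeg A B i j = A i ++ (abBlocks A B i j).flatten := rfl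

theorem length_abBlocks (A B : ℕ → List σ) (i j : ℕ) : (abBlocks A B i j).length = j - i := by
  simp [abBlocks, Ico.length]

theorem abBlocks_eq_cons (A B : ℕ → List σ) {i j : ℕ} (h : i < j) :
    abBlocks A B i j = (B (i + 1) ++ A (i + 1)) :: abBlocks A B (i + 1) j := by
  rw [abBlocks, Ico.eq_cons (by omega), map_cons, abBlocks]

theorem abSeg_self (A B : ℕ → List σ) (i : ℕ) : abSeg A B i i = A i := by
  simp [abSeg, Ico.self_empty]

theorem abSeg_eq_append (A B : ℕ → List σ) {i j : ℕ} (h : i < j) :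
    abSeg A B i j = A i ++ B (i + 1) ++ abSeg A B (i + 1) j := by
  simp [abSeg_eq_append_flatten, abBlocks_eq_cons A B h]

theorem abSeg_eq_flatten_append (A B : ℕ → List σ) {i j m : ℕ} (hij : i ≤ j) (hjm : j ≤ m) :
    abSeg A B i m = ((Ico i j).map fun t => A t ++ B (t + 1)).flatten ++ abSeg A B j m := by
  induction j, hij using Nat.le_induction with
  | base => simp [Ico.self_empty]
  | succ j hij ih =>
    rw [ih (by omega), abSeg_eq_append A B (by omega : j < m), Ico.succ_top hij]
    simp

end AbSeg

section AlphaBeta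

variable {σ : Type*} [Fintype σ] {w : List σ} {m : ℕ} {A B : ℕ → List σ}

theorem IsAlphaBetaFact.isArchOn (hw : IsAlphaBetaFact w m A B) {j : ℕ} (hj : j < m) :
    IsArchOn Finset.univ (A j ++ B (j + 1)) :=
  hw.1.2.1 _ (mem_ofFn.mpr ⟨⟨j, hj⟩, rfl⟩)

theorem IsAlphaBetaFact.isArchOn_reverse (hw : IsAlphaBetaFact w m A B) {j : ℕ} (h₀ : 0 < j)
    (hj : j ≤ m) : IsArchOn Finset.univ (B j ++ A j).reverse :=
  hw.2.2.1 _ (mem_ofFn.mpr ⟨⟨m - j, by omega⟩, by simp only [Nat.sub_sub_self hj]⟩)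

theorem IsAlphaBetaFact.isArchOn_reverse_of_mem_abBlocks (hw : IsAlphaBetaFact w m A B)
    {i : ℕ} {u : List σ} (hu : u ∈ abBlocks A B i m) : IsArchOn Finset.univ u.reverse := by
  simp only [abBlocks, mem_map, Ico.mem] at hu
  obtain ⟨l, ⟨hl₁, hl₂⟩, rfl⟩ := hu
  exact hw.isArchOn_reverse (by omega) (by omega)

theorem IsAlphaBetaFact.eq_abSeg_s11 (hw : IsAlphaBetaFact w m A B) : w = abSeg A B 0 m := by
  have hofn :
      ofFn (fun i : Fin m => A i ++ B (i + 1)) = (Ico 0 m).map fun t => A t ++ B (t + 1) := by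
    apply ext_getElem <;> simp [Ico.zero_bot]
  rw [hw.1.1, abSeg_eq_flatten_append A B (Nat.zero_le m) le_rfl, abSeg_self, hofn]

theorem IsAlphaBetaFact.eq_append_alpha_append (hw : IsAlphaBetaFact w m A B) {i : ℕ}
    (hi : i ≤ m) :
    w = ((Ico 0 i).map fun t => A t ++ B (t + 1)).flatten ++ A i ++ (abBlocks A B i m).flatten := by
  rw [hw.eq_abSeg_s11, abSeg_eq_flatten_append A B (Nat.zero_le i) hi, abSeg_eq_append_flatten,
    append_assoc]

theorem IsAlphaBetaFact.universalOn_prefix (hw : IsAlphaBetaFact w m A B) {i : ℕ} (hi : i ≤ m) :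
    UniversalOn Finset.univ i ((Ico 0 i).map fun t => A t ++ B (t + 1)).flatten := by
  have h := universalOn_flatten (S := Finset.univ) (L := (Ico 0 i).map fun t => A t ++ B (t + 1))
    (by
      simp only [mem_map, Ico.mem]
      rintro _ ⟨t, ⟨-, ht⟩, rfl⟩ x -
      exact (hw.isArchOn (by omega)).1 x (Finset.mem_univ x))
  simpa [Ico.length] using h

theorem IsAlphaBetaFact.universalOn_abBlocks (hw : IsAlphaBetaFact w m A B) (i : ℕ) :
    UniversalOn Finset.univ (m - i) (abBlocks A B i m).flatten := by
  have h := universalOn_flatten (S := Finset.univ) (L := abBlocks A B i m)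
    (fun u hu x hx => mem_reverse.mp ((hw.isArchOn_reverse_of_mem_abBlocks hu).1 x hx))
  rwa [length_abBlocks] at h

end AlphaBeta

section Blocks

theorem eq_replicate_not_of_not_mem {b : Bool} {l : List Bool} (h : b ∉ l) :
    l = replicate l.length (!b) :=
  eq_replicate_iff.mpr ⟨rfl, fun _ hx => Bool.eq_not_of_ne (fun hxb => h (hxb ▸ hx))⟩

/-- Over two letters these are exactly the reversed arches. -/
def IsBlock (u : List Bool) : Prop := ∃ f q, 0 < q ∧ u = f :: replicate q (!f)

theorem IsBlock.mem {u : List Bool} (h : IsBlock u) (b : Bool) : b ∈ u := by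
  obtain ⟨f, q, hq, rfl⟩ := h
  cases b <;> cases f <;> simp [mem_replicate, hq.ne']

theorem isBlock_of_isArchOn_reverse {u : List Bool} (h : IsArchOn Finset.univ u.reverse) :
    IsBlock u := by
  obtain ⟨hall, a, x, heq, -, hx⟩ := h
  have hu : u = x :: a.reverse := by rw [← reverse_reverse u, heq]; simp
  have hnx : (!x) ∈ a := by
    simpa [heq] using hall (!x) (Finset.mem_univ _)
  refine ⟨x, a.length, length_pos_of_mem hnx, ?_⟩
  rw [hu, ← length_reverse, ← eq_replicate_not_of_not_mem (mt mem_reverse.mp hx)]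

theorem sublist_flatten_of_isBlock {L : List (List Bool)} (hL : ∀ u ∈ L, IsBlock u)
    {s : List Bool} (hs : s.length ≤ L.length) : s <+ L.flatten :=
  (universalOn_flatten (S := Finset.univ) fun u hu b _ => (hL u hu).mem b).sublist hs (by simp)

/-- Once any letter has been matched inside the block `f (¬f)^q`, a following `f` cannot be. -/
theorem cons_sublist_of_cons_cons_sublist_block {x f : Bool} {q : ℕ} {s R : List Bool}
    (h : x :: f :: s <+ (f :: replicate q (!f)) ++ R) : f :: s <+ R := by
  have hf : f ∉ replicate q (!f) := by simp [mem_replicate]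
  rcases sublist_cons_iff.mp h with h | ⟨r, hr, h⟩
  · exact sublist_of_cons_sublist_append_of_not_mem hf ((sublist_cons_self x _).trans h)
  · rw [← (cons.inj hr).2] at h
    exact sublist_of_cons_sublist_append_of_not_mem hf h

theorem not_cons_map_headI_sublist_flatten {L : List (List Bool)} (hL : ∀ u ∈ L, IsBlock u)
    (x : Bool) : ¬ (x :: L.map headI <+ L.flatten) := by
  induction L generalizing x with
  | nil => simp
  | cons u L ih =>
    obtain ⟨f, q, -, rfl⟩ := hL u mem_cons_self
    intro h
    exact ih (fun v hv => hL v (mem_cons_of_mem _ hv)) f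
      (cons_sublist_of_cons_cons_sublist_block h)

theorem not_replicate_append_sublist {L : List (List Bool)} (hL : ∀ u ∈ L, IsBlock u)
    {t N : ℕ} {c C : Bool} (ht : 0 < t) (hcC : c ≠ C ∨ N < t) :
    ¬ (replicate t c ++ L.map headI <+ replicate N C ++ L.flatten) := by
  intro h
  have hsub : ∀ s, 0 < s → c :: L.map headI <+ replicate s c ++ L.map headI := fun s hs => by
    obtain ⟨s, rfl⟩ := Nat.exists_eq_add_of_lt hs
    simp [replicate_succ]
  by_cases hc : c = C
  · subst hc
    have hNt := hcC.resolve_left (by simp)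
    rw [show t = N + (t - N) by omega, replicate_add, append_assoc,
      append_sublist_append_left] at h
    exact not_cons_map_headI_sublist_flatten hL c ((hsub _ (by omega)).trans h)
  · exact not_cons_map_headI_sublist_flatten hL c (sublist_of_cons_sublist_append_of_not_mem
      (fun hm => hc (eq_of_mem_replicate hm)) ((hsub t ht).trans h))

theorem exists_eq_replicate_append_flatten (v : List Bool) :
    ∃ (n : ℕ) (c : Bool) (L : List (List Bool)),
      (∀ u ∈ L, IsBlock u) ∧ v = replicate n c ++ L.flatten := by
  induction v with
  | nil => exact ⟨0, true, [], by simp, rfl⟩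
  | cons x v ih =>
    obtain ⟨n, c, L, hL, rfl⟩ := ih
    rcases Nat.eq_zero_or_pos n with rfl | hn
    · exact ⟨1, x, L, hL, rfl⟩
    by_cases hxc : x = c
    · exact ⟨n + 1, c, L, hL, by simp [hxc, replicate_succ]⟩
    · refine ⟨0, x, (x :: replicate n c) :: L, ?_, by simp⟩
      intro u hu
      rcases mem_cons.mp hu with rfl | hu
      · exact ⟨x, n, hn, by rw [Bool.eq_not_of_ne (Ne.symm hxc)]⟩
      · exact hL u hu

theorem not_cons_sublist_replicate_append {L : List (List Bool)} (hL : ∀ u ∈ L, IsBlock u)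
    (n : ℕ) (c : Bool) : ¬ ((!c) :: L.map headI <+ replicate n c ++ L.flatten) := fun h =>
  not_replicate_append_sublist hL (t := 1) (c := !c) (C := c) (N := n) one_pos
    (Or.inl (by simp)) (by simpa using h)

theorem length_eq_of_simonCongr {L L' : List (List Bool)} (hL : ∀ u ∈ L, IsBlock u)
    (hL' : ∀ u ∈ L', IsBlock u) {k n n' : ℕ} {c e : Bool} (hk : L.length < k)
    (h : SimonCongr k (replicate n' e ++ L'.flatten) (replicate n c ++ L.flatten)) :
    L'.length = L.length := by
  rcases lt_trichotomy L'.length L.length with hlt | heq | hgt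
  · refine absurd ((h _ (by simp; omega)).mpr ?_) (not_cons_sublist_replicate_append hL' n' e)
    exact (sublist_flatten_of_isBlock hL (by simp; omega)).trans (sublist_append_right _ _)
  · exact heq
  · refine absurd ((h _ (by simp; omega)).mp ?_) (not_cons_sublist_replicate_append hL n c)
    exact (sublist_flatten_of_isBlock hL' (by simp; omega)).trans (sublist_append_right _ _)

theorem replicate_eq_of_simonCongr {L L' : List (List Bool)} (hL : ∀ u ∈ L, IsBlock u)
    (hL' : ∀ u ∈ L', IsBlock u) {k r N N' : ℕ} {C D : Bool} (hr : L.length = r)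
    (hr' : L'.length = r) (hk : N + r < k)
    (h : SimonCongr k (replicate N' D ++ L'.flatten) (replicate N C ++ L.flatten)) :
    replicate N' D = replicate N C := by
  have hle : N' ≤ N := by
    by_contra! hlt
    refine not_replicate_append_sublist hL (c := D) (Nat.succ_pos N) (Or.inr (Nat.lt_succ_self N))
      ((h _ (by simp; omega)).mp ?_)
    exact ((replicate_sublist_replicate D).mpr hlt).append
      (sublist_flatten_of_isBlock hL' (by simp [hr, hr']))
  rcases Nat.eq_zero_or_pos N with rfl | hN
  · obtain rfl : N' = 0 := by omega
    rfl
  have hT : replicate N C ++ L'.map headI <+ replicate N' D ++ L'.flatten :=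
    (h _ (by simp; omega)).mpr ((Sublist.refl _).append
      (sublist_flatten_of_isBlock hL (by simp [hr, hr'])))
  have hCD : C = D ∧ N ≤ N' := by
    by_contra hne
    rw [not_and_or, not_le] at hne
    exact not_replicate_append_sublist hL' hN hne hT
  rw [hCD.1, le_antisymm hle hCD.2]

theorem headI_eq_of_simonCongr {L L' : List (List Bool)} (hL : ∀ u ∈ L, IsBlock u)
    (hL' : ∀ u ∈ L', IsBlock u) {f f' : Bool} {q q' k r : ℕ} (hq' : 0 < q') {P : List Bool}
    (hr : L.length = r) (hr' : L'.length = r) (hk : P.length + r + 2 ≤ k)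
    (h : SimonCongr k (P ++ ((f' :: replicate q' (!f')) :: L').flatten)
      (P ++ ((f :: replicate q (!f)) :: L).flatten)) :
    f' = f := by
  by_contra hne
  have hf : (!f') = f := Bool.not_eq.mpr hne
  have hT : P ++ f' :: f :: L.map headI <+ P ++ ((f' :: replicate q' (!f')) :: L').flatten := by
    rw [append_sublist_append_left, flatten_cons, cons_append, cons_sublist_cons,
      ← singleton_append]
    refine Sublist.append ?_ (sublist_flatten_of_isBlock hL' (by simp [hr, hr']))
    simpa [← hf, mem_replicate] using hq'.ne'
  have hW := (append_sublist_append_left P).mp ((h _ (by simp; omega)).mp hT)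
  exact not_cons_map_headI_sublist_flatten hL f
    (cons_sublist_of_cons_cons_sublist_block (by simpa using hW))

end Blocks

section BinaryAlphaBeta

variable {w : List Bool} {m : ℕ} {A B : ℕ → List Bool}

theorem ne_nil_of_isArchOn_replicate_append {n : ℕ} {c : Bool} {b : List Bool}
    (h : IsArchOn Finset.univ (replicate n c ++ b)) : b ≠ [] := by
  rintro rfl
  simpa [mem_replicate] using h.1 (!c) (Finset.mem_univ _)

theorem IsAlphaBetaFact.alpha_eq_replicate (hw : IsAlphaBetaFact w m A B) :
    ∀ j ≤ m, ∃ c, A j = replicate (A j).length c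
  | 0, _ => by
    obtain ⟨b, hb⟩ : ∃ b, b ∉ (A 0).reverse := by
      by_contra! hb
      exact hw.2.2.2 fun x _ => hb x
    exact ⟨!b, eq_replicate_not_of_not_mem (mt mem_reverse.mpr hb)⟩
  | j + 1, hj => by
    obtain ⟨c, hc⟩ := hw.alpha_eq_replicate j (by omega)
    have hB := ne_nil_of_isArchOn_replicate_append (hc ▸ hw.isArchOn (j := j) (by omega))
    obtain ⟨f, q, -, hfq⟩ := isBlock_of_isArchOn_reverse (hw.isArchOn_reverse (by omega) hj)
    exact ⟨!f, eq_replicate_of_append_eq_cons_replicate hfq hB⟩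

theorem IsAlphaBetaFact.beta_ne_nil (hw : IsAlphaBetaFact w m A B) {j : ℕ} (hj : j < m) :
    B (j + 1) ≠ [] := by
  obtain ⟨c, hc⟩ := hw.alpha_eq_replicate j hj.le
  exact ne_nil_of_isArchOn_replicate_append (hc ▸ hw.isArchOn hj)

/-- A longer `β_{j+1}` would make the arch `α_jβ_{j+1}` end in a repeated letter. -/
theorem IsAlphaBetaFact.exists_beta_eq (hw : IsAlphaBetaFact w m A B) {j q : ℕ} {f : Bool}
    (hj : j < m) (h : B (j + 1) ++ A (j + 1) = f :: replicate q (!f)) :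
    ∃ t ≤ 1, B (j + 1) = f :: replicate t (!f) := by
  obtain ⟨y, b, hyb⟩ := exists_cons_of_ne_nil (hw.beta_ne_nil hj)
  rw [hyb, cons_append, cons.injEq, append_eq_replicate_iff] at h
  obtain ⟨rfl, -, hb, -⟩ := h
  refine ⟨b.length, ?_, by rw [hyb, ← hb]⟩
  by_contra! h2
  obtain ⟨t, ht⟩ := Nat.exists_eq_add_of_lt h2
  have harch := hw.isArchOn hj
  rw [hyb, hb, show b.length = t + 2 by omega, ← singleton_append, ← append_assoc] at harch
  exact not_isArchOn_append_replicate _ _ _ harch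

theorem IsAlphaBetaFact.isBlock_of_mem_abBlocks (hw : IsAlphaBetaFact w m A B) {i : ℕ} :
    ∀ u ∈ abBlocks A B i m, IsBlock u := fun _ hu =>
  isBlock_of_isArchOn_reverse (hw.isArchOn_reverse_of_mem_abBlocks hu)

theorem IsAlphaBetaFact.exists_eq_append_of_simonCongr (hw : IsAlphaBetaFact w m A B)
    {j d kk n : ℕ} {e : Bool} {L : List (List Bool)} (hj : j + (d + 1) = m)
    (hAj : (A j).length < kk) (hL : ∀ u ∈ L, IsBlock u) (hLd : L.length = d + 1)
    (h : SimonCongr (kk + (d + 1)) (replicate n e ++ L.flatten) (abSeg A B j m)) :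
    ∃ (n' : ℕ) (e' : Bool) (L' : List (List Bool)), (∀ u ∈ L', IsBlock u) ∧ L'.length = d ∧
      replicate n e ++ L.flatten = A j ++ B (j + 1) ++ (replicate n' e' ++ L'.flatten) := by
  have hjm : j < m := by omega
  obtain ⟨c, hc⟩ := hw.alpha_eq_replicate j hjm.le
  have hLw := hw.isBlock_of_mem_abBlocks (i := j)
  rw [abBlocks_eq_cons A B hjm] at hLw
  have hlen : (abBlocks A B (j + 1) m).length = d := by rw [length_abBlocks]; omega
  rw [abSeg_eq_append_flatten, abBlocks_eq_cons A B hjm, hc] at h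
  have hrep := replicate_eq_of_simonCongr hLw hL (r := d + 1) (by simp [hlen]) hLd (by omega) h
  rw [hrep] at h
  obtain ⟨u', L', rfl⟩ := exists_cons_of_length_eq_add_one hLd
  obtain ⟨f', q', hq', rfl⟩ := hL _ mem_cons_self
  obtain ⟨f, q, -, hfq⟩ := hLw _ mem_cons_self
  rw [hfq] at h
  obtain rfl := headI_eq_of_simonCongr (fun v hv => hLw v (mem_cons_of_mem _ hv))
    (fun v hv => hL v (mem_cons_of_mem _ hv)) hq' hlen (by simpa using hLd) (by simp; omega) h
  obtain ⟨t, ht, hB⟩ := hw.exists_beta_eq hjm hfq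
  refine ⟨q' - t, !f', L', fun v hv => hL v (mem_cons_of_mem _ hv), by simpa using hLd, ?_⟩
  obtain ⟨s, rfl⟩ : ∃ s, q' = t + s := ⟨q' - t, by omega⟩
  rw [hrep, ← hc, hB]
  simp only [flatten_cons, Nat.add_sub_cancel_left, replicate_add, append_assoc, cons_append]

theorem IsAlphaBetaFact.abSeg_eq_of_simonCongr (hw : IsAlphaBetaFact w m A B) {kk : ℕ}
    (hA : ∀ i ≤ m, (A i).length < kk) :
    ∀ d j, j + d = m → ∀ {n : ℕ} {e : Bool} {L : List (List Bool)}, (∀ u ∈ L, IsBlock u) →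
      L.length = d → SimonCongr (kk + d) (replicate n e ++ L.flatten) (abSeg A B j m) →
      replicate n e ++ L.flatten = abSeg A B j m := by
  intro d
  induction d with
  | zero =>
    intro j hj n e L hL hLd h
    obtain rfl : j = m := by omega
    obtain rfl : L = [] := eq_nil_of_length_eq_zero hLd
    obtain ⟨c, hc⟩ := hw.alpha_eq_replicate j le_rfl
    rw [abSeg_self, hc] at h ⊢
    simpa using replicate_eq_of_simonCongr (L := []) (L' := []) (by simp) (by simp) rfl rfl
      (by have := hA j le_rfl; omega) (by simpa using h)
  | succ d ih =>
    intro j hj n e L hL hLd h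
    have hjm : j < m := by omega
    obtain ⟨n', e', L', hL', hL'd, hV⟩ :=
      hw.exists_eq_append_of_simonCongr hj (hA j hjm.le) hL hLd h
    obtain ⟨-, P, x, hPx, -, hx⟩ := hw.isArchOn hjm
    have hPx' : ∀ Z, A j ++ B (j + 1) ++ Z = P ++ x :: Z := fun Z => by simp [hPx]
    rw [hV, abSeg_eq_append A B hjm, hPx', hPx'] at h ⊢
    rw [ih (j + 1) (by omega) hL' hL'd (SimonCongr.of_append_cons hx h)]

theorem IsAlphaBetaFact.eq_of_simonCongr (hw : IsAlphaBetaFact w m A B) {k : ℕ}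
    (hk : ∀ i ≤ m, m + (A i).length < k) {v : List Bool} (hv : SimonCongr k v w) : v = w := by
  obtain ⟨n, e, L, hL, rfl⟩ := exists_eq_replicate_append_flatten v
  obtain ⟨c, hc⟩ := hw.alpha_eq_replicate 0 (Nat.zero_le m)
  have hk₀ := hk 0 (Nat.zero_le m)
  rw [hw.eq_abSeg_s11] at hv ⊢
  have hLm : L.length = m := by
    have hv' := hv
    rw [abSeg_eq_append_flatten, hc] at hv'
    simpa [length_abBlocks] using
      length_eq_of_simonCongr hw.isBlock_of_mem_abBlocks hL (by simp [length_abBlocks]; omega) hv'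
  refine hw.abSeg_eq_of_simonCongr (kk := k - m) (fun i hi => by have := hk i hi; omega) m 0
    (by simp) hL hLm ?_
  rwa [show k - m + m = k by omega]

theorem IsAlphaBetaFact.exists_simonCongr_length_eq_succ (hw : IsAlphaBetaFact w m A B)
    {k i : ℕ} (hi : i ≤ m) (hk : k ≤ m + (A i).length) :
    ∃ v, SimonCongr k v w ∧ v.length = w.length + 1 := by
  obtain ⟨c, hc⟩ := hw.alpha_eq_replicate i hi
  have hw' := hw.eq_append_alpha_append hi
  rw [hc] at hw'
  refine ⟨((Ico 0 i).map fun t => A t ++ B (t + 1)).flatten ++ replicate ((A i).length + 1) c ++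
    (abBlocks A B i m).flatten, ?_, ?_⟩
  · rw [hw']
    exact simonCongr_append_replicate_succ (hw.universalOn_prefix hi) (hw.universalOn_abBlocks i)
      (by omega) c
  · rw [hw']
    simp only [length_append, length_replicate]
    omega

end BinaryAlphaBeta

theorem binary_singleton_class_iff_general (k : ℕ) (w : List Bool) (m : ℕ)
    (A B : ℕ → List Bool)
    (hw : IsAlphaBetaFact w m A B) :
    {w' : List Bool | SimonCongr k w' w} = {w} ↔
      (m < k ∧ ∀ i ≤ m, (A i).length < k - m) := by
  have hcond : (m < k ∧ ∀ i ≤ m, (A i).length < k - m) ↔ ∀ i ≤ m, m + (A i).length < k :=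
    ⟨fun h i hi => by have := h.2 i hi; omega,
      fun h => ⟨by have := h 0 (Nat.zero_le m); omega, fun i hi => by have := h i hi; omega⟩⟩
  rw [hcond, Set.eq_singleton_iff_unique_mem]
  constructor
  · rintro ⟨-, huniq⟩ i hi
    by_contra! hk
    obtain ⟨v, hv, hlen⟩ := hw.exists_simonCongr_length_eq_succ hi hk
    rw [huniq v hv] at hlen
    omega
  · exact fun hk => ⟨fun _ _ => Iff.rfl, fun v hv => hw.eq_of_simonCongr hk hv⟩

/-- a binary Simon congruence class is a singleton iff
`ι(w) < k` and all `α`-factors are shorter than `k − ι(w)`. -/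
theorem binary_singleton_class_iff (k : ℕ) (hk : 1 ≤ k) (w : List Bool) (m : ℕ)
    (A B : ℕ → List Bool)
    (hw : IsAlphaBetaFact w m A B) (hiw : iotaUniv w = m) :
    {w' : List Bool | SimonCongr k w' w} = {w} ↔
      (m < k ∧ ∀ i ≤ m, (A i).length < k - m) :=
  binary_singleton_class_iff_general k w m A B hw
end
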